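/- One has (R⊗R)(c(Δ(α))) = α*⊗α* − qζ·γ⊗γ*, whereas Δ(R(α)) = α*⊗α* − q·γ⊗γ*. Consequently, if q ∉ ℝ (equivalently ζ ≠ 1), then Δ ∘ R ≠ (R⊗R) ∘ c ∘ Δ as maps 𝒜 → 𝒜 ⊗_ℂ 𝒜. -/

import Mathlib

open scoped TensorProduct

noncomputable section

/-- The monomial family `α^n γ^m (γ*)^k` (for `n ≥ 0`) resp. `(α*)^{-n} γ^m (γ*)^k`
(for `n < 0`), indexed by `(n, m, k) ∈ ℤ × ℕ × ℕ`. -/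
def suqMono {A : Type*} [Ring A] [StarRing A] (a g : A) (i : ℤ × ℕ × ℕ) : A :=
  (if 0 ≤ i.1 then a ^ i.1.toNat else (star a) ^ (-i.1).toNat) * g ^ i.2.1 * (star g) ^ i.2.2

/-- The degree-`p` homogeneous component `𝒜_p`: the `ℂ`-span of the basis monomials with
`m - k = p`. -/
def suqHomog {A : Type*} [Ring A] [Algebra ℂ A] [StarRing A] (a g : A) (p : ℤ) :
    Submodule ℂ A :=
  Submodule.span ℂ
    {x | ∃ i : ℤ × ℕ × ℕ, (i.2.1 : ℤ) - (i.2.2 : ℤ) = p ∧ x = suqMono a g i}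

/-- The defining relations of `Pol(SU_q(2))`. -/
def SUqRel {A : Type*} [Ring A] [Algebra ℂ A] [StarRing A] (q : ℂ) (a g : A) : Prop :=
  star a * a + star g * g = 1 ∧
  a * star a + ((‖q‖ : ℂ) ^ 2) • (star g * g) = 1 ∧
  g * star g = star g * g ∧
  a * g = (starRingEnd ℂ q) • (g * a) ∧
  a * star g = q • (star g * a)

/-- The monomials form a `ℂ`-basis. -/
def SUqBasis {A : Type*} [Ring A] [Algebra ℂ A] [StarRing A] (a g : A) : Prop :=
  LinearIndependent ℂ (suqMono a g) ∧
  Submodule.span ℂ (Set.range (suqMono a g)) = ⊤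

/-- The characterizing properties of the antipode `S`. -/
def SUqAntipode {A : Type*} [Ring A] [Algebra ℂ A] [StarRing A] (q : ℂ) (a g : A)
    (S : A →ₗ[ℂ] A) : Prop :=
  S 1 = 1 ∧ S a = star a ∧ S (star a) = a ∧
  S g = (-(starRingEnd ℂ q)) • g ∧ S (star g) = (-q⁻¹) • star g ∧
  (∀ p : ℤ, ∀ x ∈ suqHomog a g p, S x ∈ suqHomog a g p) ∧
  (∀ p r : ℤ, ∀ x ∈ suqHomog a g p, ∀ y ∈ suqHomog a g r,
    S (x * y) = ((q / starRingEnd ℂ q) ^ (-(p * r))) • (S y * S x))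

/-- The braided multiplication on `𝒜 ⊗ 𝒜`. -/
def SUqBraidedMul {A : Type*} [Ring A] [Algebra ℂ A] [StarRing A] (q : ℂ) (a g : A)
    (μ : A ⊗[ℂ] A →ₗ[ℂ] A ⊗[ℂ] A →ₗ[ℂ] A ⊗[ℂ] A) : Prop :=
  ∀ (x w : A) (r s : ℤ), ∀ y ∈ suqHomog a g r, ∀ z ∈ suqHomog a g s,
    μ (x ⊗ₜ[ℂ] y) (z ⊗ₜ[ℂ] w)
      = ((q / starRingEnd ℂ q) ^ (-(r * s))) • ((x * z) ⊗ₜ[ℂ] (y * w))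

/-- The characterizing properties of the comultiplication `Δ` (as a unital algebra
homomorphism into the braided tensor square with multiplication `μ`). -/
def SUqComul {A : Type*} [Ring A] [Algebra ℂ A] [StarRing A] (q : ℂ) (a g : A)
    (μ : A ⊗[ℂ] A →ₗ[ℂ] A ⊗[ℂ] A →ₗ[ℂ] A ⊗[ℂ] A) (Δ : A →ₗ[ℂ] A ⊗[ℂ] A) : Prop :=
  Δ 1 = 1 ⊗ₜ[ℂ] 1 ∧ (∀ x y : A, Δ (x * y) = μ (Δ x) (Δ y)) ∧
  Δ a = a ⊗ₜ[ℂ] a - q • ((star g) ⊗ₜ[ℂ] g) ∧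
  Δ g = g ⊗ₜ[ℂ] a + (star a) ⊗ₜ[ℂ] g ∧
  Δ (star a) = (star a) ⊗ₜ[ℂ] (star a) - q • (g ⊗ₜ[ℂ] (star g)) ∧
  Δ (star g) = (star g) ⊗ₜ[ℂ] (star a) + a ⊗ₜ[ℂ] (star g)

/-- The braided flip `c` on `𝒜 ⊗ 𝒜`. -/
def SUqFlip {A : Type*} [Ring A] [Algebra ℂ A] [StarRing A] (q : ℂ) (a g : A)
    (c : A ⊗[ℂ] A →ₗ[ℂ] A ⊗[ℂ] A) : Prop :=
  ∀ (p r : ℤ), ∀ x ∈ suqHomog a g p, ∀ y ∈ suqHomog a g r,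
    c (x ⊗ₜ[ℂ] y) = ((q / starRingEnd ℂ q) ^ (-(p * r))) • (y ⊗ₜ[ℂ] x)

/-- The Haar functional, defined on the basis. -/
def SUqHaar {A : Type*} [Ring A] [Algebra ℂ A] [StarRing A] (q : ℂ) (a g : A)
    (h : A →ₗ[ℂ] ℂ) : Prop :=
  ∀ i : ℤ × ℕ × ℕ, h (suqMono a g i) =
    if i.1 = 0 ∧ i.2.1 = i.2.2
    then (1 - (‖q‖ : ℂ) ^ 2) / (1 - (‖q‖ : ℂ) ^ (2 * (i.2.1 + 1)))
    else 0

/-- The unitary antipode `R = S ∘ τ_{i/2} ∘ ϑ`, i.e. `R(x) = ζ^{p²/2}·|q|^{-p}·S(x)` for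
`x ∈ 𝒜_p` (principal branch `ζ^z = exp(z·Log ζ)`). -/
def SUqUnitaryAntipode {A : Type*} [Ring A] [Algebra ℂ A] [StarRing A] (q : ℂ) (a g : A)
    (S : A →ₗ[ℂ] A) (R : A →ₗ[ℂ] A) : Prop :=
  ∀ (p : ℤ), ∀ x ∈ suqHomog a g p,
    R x = (Complex.exp (((p : ℂ) ^ 2 / 2) * Complex.log (q / starRingEnd ℂ q)) *
      ((‖q‖ : ℂ) ^ (-p))) • S x

/-!
The braided flip multiplies the summand `γ* ⊗ γ` of `Δ(α)` by `ζ`, its factors having degrees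
`-1` and `1`, while `R ⊗ R` fixes `γ ⊗ γ*`: the scalars `ζ^{1/2}|q|^{∓1}` coming from `ϑ` and
`τ_{i/2}` combine with the antipode's `-conj q` and `-q⁻¹` to `ζ · conj q / q = 1`. So the two
sides at `α` differ by `(qζ - q) • γ ⊗ γ*`, and `γ ⊗ γ*` is a nonzero tensor of basis vectors.
-/

open ComplexConjugate

theorem TensorProduct.tmul_ne_zero {K V W : Type*} [Field K] [AddCommGroup V] [Module K V]
    [AddCommGroup W] [Module K W] {x : V} {y : W} (hx : x ≠ 0) (hy : y ≠ 0) :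
    x ⊗ₜ[K] y ≠ 0 := by
  obtain ⟨φ, hφ⟩ := Module.Projective.exists_dual_ne_zero K hx
  obtain ⟨ψ, hψ⟩ := Module.Projective.exists_dual_ne_zero K hy
  intro h
  have := congrArg (TensorProduct.lift ((LinearMap.mul K K).compl₁₂ φ ψ)) h
  simp only [TensorProduct.lift.tmul, LinearMap.compl₁₂_apply, LinearMap.mul_apply',
    map_zero] at this
  exact mul_ne_zero hφ hψ this

theorem Complex.div_conj_ne_one {q : ℂ} (h : q.im ≠ 0) : q / conj q ≠ 1 := by
  have hq : conj q ≠ 0 := by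
    rw [map_ne_zero]; rintro rfl; exact h rfl
  rw [Ne, div_eq_one_iff_eq hq, eq_comm, Complex.conj_eq_iff_im]
  exact h

theorem Complex.exp_half_log_mul_self {z : ℂ} (hz : z ≠ 0) :
    exp (1 / 2 * log z) * exp (1 / 2 * log z) = z := by
  rw [← Complex.exp_add, ← add_mul, add_halves, one_mul, Complex.exp_log hz]

section Generators

variable {A : Type*} [Ring A] [Algebra ℂ A] [StarRing A] {q : ℂ} {a g : A}

theorem suqMono_mem_suqHomog (i : ℤ × ℕ × ℕ) :
    suqMono a g i ∈ suqHomog a g (i.2.1 - i.2.2) :=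
  Submodule.subset_span ⟨i, rfl, rfl⟩

theorem mem_suqHomog_zero : a ∈ suqHomog a g 0 := by
  simpa [suqMono] using suqMono_mem_suqHomog (a := a) (g := g) (1, 0, 0)

theorem mem_suqHomog_one : g ∈ suqHomog a g 1 := by
  simpa [suqMono] using suqMono_mem_suqHomog (a := a) (g := g) (0, 1, 0)

theorem star_mem_suqHomog_neg_one : star g ∈ suqHomog a g (-1) := by
  simpa [suqMono] using suqMono_mem_suqHomog (a := a) (g := g) (0, 0, 1)

theorem SUqBasis.tmul_star_ne_zero (hb : SUqBasis a g) : g ⊗ₜ[ℂ] star g ≠ 0 := by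
  refine TensorProduct.tmul_ne_zero ?_ ?_
  · simpa [suqMono] using hb.1.ne_zero (0, 1, 0)
  · simpa [suqMono] using hb.1.ne_zero (0, 0, 1)

theorem SUqFlip.apply_comul_a {μ : A ⊗[ℂ] A →ₗ[ℂ] A ⊗[ℂ] A →ₗ[ℂ] A ⊗[ℂ] A}
    {Δ : A →ₗ[ℂ] A ⊗[ℂ] A} {c : A ⊗[ℂ] A →ₗ[ℂ] A ⊗[ℂ] A}
    (hc : SUqFlip q a g c) (hΔ : SUqComul q a g μ Δ) :
    c (Δ a) = a ⊗ₜ[ℂ] a - (q * (q / conj q)) • (g ⊗ₜ[ℂ] star g) := by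
  rw [hΔ.2.2.1, map_sub, map_smul, hc 0 0 a mem_suqHomog_zero a mem_suqHomog_zero,
    hc (-1) 1 (star g) star_mem_suqHomog_neg_one g mem_suqHomog_one, smul_smul]
  simp

variable {S R : A →ₗ[ℂ] A}

theorem SUqUnitaryAntipode.apply_a (hS : SUqAntipode q a g S)
    (hR : SUqUnitaryAntipode q a g S R) : R a = star a := by
  simpa [hS.2.1] using hR 0 a mem_suqHomog_zero

theorem SUqUnitaryAntipode.map_tmul_star (hq : q ≠ 0) (hS : SUqAntipode q a g S)
    (hR : SUqUnitaryAntipode q a g S R) :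
    TensorProduct.map R R (g ⊗ₜ[ℂ] star g) = g ⊗ₜ[ℂ] star g := by
  have hconj : conj q ≠ 0 := (map_ne_zero _).mpr hq
  have hζ : q / conj q ≠ 0 := div_ne_zero hq hconj
  have hnorm : (‖q‖ : ℂ) ≠ 0 := by exact_mod_cast norm_ne_zero_iff.mpr hq
  rw [TensorProduct.map_tmul, hR 1 g mem_suqHomog_one,
    hR (-1) (star g) star_mem_suqHomog_neg_one, hS.2.2.2.1, hS.2.2.2.2.1,
    smul_smul, smul_smul, TensorProduct.smul_tmul_smul]
  convert one_smul ℂ (g ⊗ₜ[ℂ] star g) using 2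
  push_cast
  rw [show ((1 : ℂ)) ^ 2 / 2 = 1 / 2 by norm_num, show ((-1 : ℂ)) ^ 2 / 2 = 1 / 2 by norm_num,
    zpow_neg_one, zpow_one]
  calc _ = (Complex.exp (1 / 2 * Complex.log (q / conj q)) *
          Complex.exp (1 / 2 * Complex.log (q / conj q)))
        * ((‖q‖ : ℂ)⁻¹ * ‖q‖) * (conj q * q⁻¹) := by ring
    _ = q / conj q * (conj q * q⁻¹) := by
        rw [Complex.exp_half_log_mul_self hζ, inv_mul_cancel₀ hnorm, mul_one]
    _ = 1 := by field_simp

end Generators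

theorem suq_unitary_antipode_comul_fails_general {A : Type*} [Ring A] [Algebra ℂ A] [StarRing A]
    (q : ℂ) (hq0 : 0 < ‖q‖)
    (a g : A) (hbasis : SUqBasis a g)
    (μ : A ⊗[ℂ] A →ₗ[ℂ] A ⊗[ℂ] A →ₗ[ℂ] A ⊗[ℂ] A)
    (Δ : A →ₗ[ℂ] A ⊗[ℂ] A) (hΔ : SUqComul q a g μ Δ)
    (c : A ⊗[ℂ] A →ₗ[ℂ] A ⊗[ℂ] A) (hc : SUqFlip q a g c)
    (S : A →ₗ[ℂ] A) (hS : SUqAntipode q a g S)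
    (R : A →ₗ[ℂ] A) (hR : SUqUnitaryAntipode q a g S R) :
    (TensorProduct.map R R) (c (Δ a))
      = (star a) ⊗ₜ[ℂ] (star a) - (q * (q / starRingEnd ℂ q)) • (g ⊗ₜ[ℂ] (star g)) ∧
    Δ (R a) = (star a) ⊗ₜ[ℂ] (star a) - q • (g ⊗ₜ[ℂ] (star g)) ∧
    (q.im ≠ 0 →
      (fun x : A => Δ (R x)) ≠ (fun x : A => (TensorProduct.map R R) (c (Δ x)))) := by
  have hq : q ≠ 0 := norm_pos_iff.mp hq0
  have hRa : R a = star a := hR.apply_a hS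
  have hflip : TensorProduct.map R R (c (Δ a))
      = star a ⊗ₜ[ℂ] star a - (q * (q / conj q)) • (g ⊗ₜ[ℂ] star g) := by
    rw [hc.apply_comul_a hΔ, map_sub, map_smul, TensorProduct.map_tmul, hRa,
      hR.map_tmul_star hq hS]
  have hcomul : Δ (R a) = star a ⊗ₜ[ℂ] star a - q • (g ⊗ₜ[ℂ] star g) := by
    rw [hRa, hΔ.2.2.2.2.1]
  refine ⟨hflip, hcomul, fun him heq => Complex.div_conj_ne_one him ?_⟩
  have hsmul : q • (g ⊗ₜ[ℂ] star g) = (q * (q / conj q)) • (g ⊗ₜ[ℂ] star g) :=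
    sub_right_injective (hcomul.symm.trans ((congrFun heq a).trans hflip))
  exact (mul_eq_left₀ hq).mp (smul_left_injective ℂ hbasis.tmul_star_ne_zero hsmul).symm

/-- `(R⊗R)(c(Δ(α))) = α*⊗α* − qζ·γ⊗γ*` while
`Δ(R(α)) = α*⊗α* − q·γ⊗γ*`; hence if `q ∉ ℝ` then `Δ∘R ≠ (R⊗R)∘c∘Δ`. -/
theorem suq_unitary_antipode_comul_fails {A : Type*} [Ring A] [Algebra ℂ A] [StarRing A]
    [StarModule ℂ A]
    (q : ℂ) (hq0 : 0 < ‖q‖) (hq1 : ‖q‖ < 1)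
    (a g : A) (hrel : SUqRel q a g) (hbasis : SUqBasis a g)
    (μ : A ⊗[ℂ] A →ₗ[ℂ] A ⊗[ℂ] A →ₗ[ℂ] A ⊗[ℂ] A) (hμ : SUqBraidedMul q a g μ)
    (Δ : A →ₗ[ℂ] A ⊗[ℂ] A) (hΔ : SUqComul q a g μ Δ)
    (c : A ⊗[ℂ] A →ₗ[ℂ] A ⊗[ℂ] A) (hc : SUqFlip q a g c)
    (S : A →ₗ[ℂ] A) (hS : SUqAntipode q a g S)
    (R : A →ₗ[ℂ] A) (hR : SUqUnitaryAntipode q a g S R) :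
    (TensorProduct.map R R) (c (Δ a))
      = (star a) ⊗ₜ[ℂ] (star a) - (q * (q / starRingEnd ℂ q)) • (g ⊗ₜ[ℂ] (star g)) ∧
    Δ (R a) = (star a) ⊗ₜ[ℂ] (star a) - q • (g ⊗ₜ[ℂ] (star g)) ∧
    (q.im ≠ 0 →
      (fun x : A => Δ (R x)) ≠ (fun x : A => (TensorProduct.map R R) (c (Δ x)))) :=
  suq_unitary_antipode_comul_fails_general q hq0 a g hbasis μ Δ hΔ c hc S hS R hR
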